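/- Let (F_n) and (G_k) be totally disjoint sequences of filters on X with equal contours H := Li F_n = Li G_k, and let Δ := {(n,k) : F_n # G_k}. Then for each n the section Δn := {k : (n,k) ∈ Δ} is finite, and for each k the section Δ⁻¹k := {n : (n,k) ∈ Δ} is finite. -/
import Mathlib


open Filter

/-- The contour (set-theoretic lower limit) of a sequence of filters:
`A ∈ contourSeq F` iff `A ∈ F n` for all sufficiently large `n`. -/
def contourSeq {X : Type*} (F : ℕ → Filter X) : Filter X := Filter.atTop.bind F

/-- Two filters mesh (`#`) if every member of the first intersects every member of the second. -/
def Mesh {X : Type*} (F G : Filter X) : Prop := ∀ A ∈ F, ∀ B ∈ G, (A ∩ B).Nonempty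

/-- A sequence of filters is totally disjoint if there are pairwise disjoint sets `A n ∈ F n`. -/
def TotallyDisjoint {X : Type*} (F : ℕ → Filter X) : Prop :=
  ∃ A : ℕ → Set X, (∀ n, A n ∈ F n) ∧ Pairwise fun m n => Disjoint (A m) (A n)

lemma mem_contourSeq {X : Type*} (F : ℕ → Filter X) (s : Set X) :
    s ∈ contourSeq F ↔ ∀ᶠ n in atTop, s ∈ F n := by
  simp only [contourSeq, Filter.mem_bind]
  constructor
  · rintro ⟨t, ht, h⟩
    exact Filter.mem_of_superset ht h
  · intro h
    exact ⟨{n | s ∈ F n}, h, fun _ hn => hn⟩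

lemma key {X : Type*} (F G : ℕ → Filter X)
    (hF : TotallyDisjoint F) (h : contourSeq F = contourSeq G) :
    ∀ n, {k | Mesh (F n) (G k)}.Finite := by
  obtain ⟨A, hA, hAd⟩ := hF
  intro n
  have hmem : (A n)ᶜ ∈ contourSeq F := by
    rw [mem_contourSeq]
    filter_upwards [Filter.eventually_gt_atTop n] with m hm
    exact mem_of_superset (hA m) fun x hx => Set.disjoint_left.1 (hAd hm.ne') hx
  rw [h, mem_contourSeq, eventually_atTop] at hmem
  obtain ⟨K, hK⟩ := hmem
  apply (Set.finite_Iio K).subset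
  intro k hk
  simp only [Set.mem_Iio]
  by_contra hkK
  push_neg at hkK
  have := hk (A n) (hA n) _ (hK k hkK)
  simp at this

theorem delta_sections_finite {X : Type*} (F G : ℕ → Filter X)
    (hF : TotallyDisjoint F) (hG : TotallyDisjoint G)
    (h : contourSeq F = contourSeq G) :
    (∀ n, {k | Mesh (F n) (G k)}.Finite) ∧ (∀ k, {n | Mesh (F n) (G k)}.Finite) := by
  refine ⟨key F G hF h, fun k => ?_⟩
  have := key G F hG h.symm k
  refine this.subset fun n hn => ?_
  intro B hB A hA
  rw [Set.inter_comm]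
  exact hn A hA B hB
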